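/- arXiv:2205.03118 — 2 statements merged into one kernel-verified Lean document; each statement's English description precedes it below -/
import Mathlib

section
/- Bounded rotated cost implies weak turnpike counting bound: suppose α̲ ∈ 𝒦_∞, C > 0, N ≥ 1, and d : {0,...,N-1} → [0,∞) satisfies ∑_{k=0}^{N-1} ((N-k)/N)·α̲(d(k)) ≤ C. Then for every ε > 0, the number Q_ε of indices k with d(k) ≤ ε satisfies Q_ε ≥ N - √N / α(ε), where α(ε) = √(α̲(ε))/√(2C). -/
/-- A class `𝒦_∞` function on `[0,∞)`. -/
def IsKInfty (α : ℝ → ℝ) : Prop :=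
  ContinuousOn α (Set.Ici 0) ∧ StrictMonoOn α (Set.Ici 0) ∧ α 0 = 0 ∧
    ∀ M : ℝ, ∃ x, 0 ≤ x ∧ M ≤ α x

/-
Among the `N` steps, the `m` steps with `d k > ε` carry discount weights `(N - k) / N` that are
distinct multiples of `1 / N`, so their total weight is at least `(1 + ⋯ + m) / N ≥ m² / (2N)`.
Each of them costs at least `α̲ ε`, hence `α̲ ε · m² ≤ 2 N C`, i.e. `m ≤ √N / α(ε)`.
-/

open Finset

namespace IsKInfty

variable {α : ℝ → ℝ}

lemma pos (hα : IsKInfty α) {x : ℝ} (hx : 0 < x) : 0 < α x := by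
  have h := hα.2.1 (Set.self_mem_Ici) (Set.mem_Ici.mpr hx.le) hx
  rwa [hα.2.2.1] at h

lemma nonneg (hα : IsKInfty α) {x : ℝ} (hx : 0 ≤ x) : 0 ≤ α x := by
  rcases hx.eq_or_lt with rfl | hx
  · exact hα.2.2.1.ge
  · exact (hα.pos hx).le

end IsKInfty

lemma two_mul_sum_range_one_add (m : ℕ) :
    2 * ∑ n ∈ range m, (1 + (n : ℤ)) = m * (m + 1) := by
  induction m with
  | zero => simp
  | succ m ih => rw [sum_range_succ, mul_add, ih]; push_cast; ring

lemma Fin.card_mul_card_add_one_le_two_mul_sum_sub {N : ℕ} (s : Finset (Fin N)) :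
    (#s : ℤ) * (#s + 1) ≤ 2 * ∑ k ∈ s, ((N : ℤ) - k) := by
  have hinj : Set.InjOn (fun k : Fin N => (N : ℤ) - k) s := fun a _ b _ hab =>
    Fin.ext (by simpa using hab)
  have hpos : ∀ x ∈ s.image (fun k : Fin N => (N : ℤ) - k), 1 ≤ x := by
    simp only [mem_image]
    rintro _ ⟨k, -, rfl⟩
    have := k.isLt
    omega
  have hsum := sum_range_le_sum hpos
  rw [card_image_of_injOn hinj, sum_image hinj] at hsum
  rw [← two_mul_sum_range_one_add]
  exact mul_le_mul_of_nonneg_left hsum zero_le_two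

lemma mul_sq_card_le_two_mul_sum_sub_mul {N : ℕ} {g : Fin N → ℝ} (hg : ∀ k, 0 ≤ g k)
    {s : Finset (Fin N)} {a : ℝ} (ha : 0 ≤ a) (hs : ∀ k ∈ s, a ≤ g k) :
    a * #s ^ 2 ≤ 2 * ∑ k, ((N : ℝ) - k) * g k := by
  have hweight : ∀ k : Fin N, 0 ≤ (N : ℝ) - k := fun k => by
    have : ((k : ℕ) : ℝ) < N := by exact_mod_cast k.isLt
    linarith
  have hcount : (#s : ℝ) * (#s + 1) ≤ 2 * ∑ k ∈ s, ((N : ℝ) - k) := by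
    exact_mod_cast Fin.card_mul_card_add_one_le_two_mul_sum_sub s
  calc a * #s ^ 2 ≤ a * (#s * (#s + 1)) := by gcongr; nlinarith
    _ ≤ a * (2 * ∑ k ∈ s, ((N : ℝ) - k)) := by gcongr
    _ = 2 * ∑ k ∈ s, ((N : ℝ) - k) * a := by rw [← sum_mul]; ring
    _ ≤ 2 * ∑ k ∈ s, ((N : ℝ) - k) * g k := by
      gcongr with k hk
      · exact hweight k
      · exact hs k hk
    _ ≤ 2 * ∑ k, ((N : ℝ) - k) * g k := by
      gcongr
      · exact fun k _ _ => mul_nonneg (hweight k) (hg k)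
      · exact subset_univ s

lemma le_sqrt_div_sqrt_div_sqrt {m n a c : ℝ} (hn : 0 ≤ n) (ha : 0 < a) (h : a * m ^ 2 ≤ n * c) :
    m ≤ √n / (√a / √c) := by
  rw [div_div_eq_mul_div, ← Real.sqrt_mul hn, ← Real.sqrt_div' _ ha.le]
  exact Real.le_sqrt_of_sq_le (by rw [le_div_iff₀ ha]; linarith)

theorem bounded_rotated_cost_implies_weak_turnpike_general
    (alphaLow : ℝ → ℝ) (hα : IsKInfty alphaLow)
    (C : ℝ) (N : ℕ) (hN : 1 ≤ N)
    (d : Fin N → ℝ) (hd : ∀ k, 0 ≤ d k)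
    (hsum : ∑ k : Fin N, (((N : ℝ) - (k : ℕ)) / N) * alphaLow (d k) ≤ C) :
    ∀ ε : ℝ, 0 < ε →
      (N : ℝ) - Real.sqrt N / (Real.sqrt (alphaLow ε) / Real.sqrt (2 * C)) ≤
        ((Finset.univ.filter (fun k : Fin N => d k ≤ ε)).card : ℝ) := by
  intro ε hε
  have hNpos : (0 : ℝ) < N := by exact_mod_cast hN
  set far := univ.filter fun k : Fin N => ¬d k ≤ ε
  have hcard : (#(univ.filter fun k : Fin N => d k ≤ ε) : ℝ) = N - #far := by
    rw [eq_sub_iff_add_eq]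
    exact_mod_cast (card_filter_add_card_filter_not (s := univ) _).trans (card_fin N)
  have hcost : alphaLow ε * #far ^ 2 ≤ 2 * ∑ k, ((N : ℝ) - k) * alphaLow (d k) :=
    mul_sq_card_le_two_mul_sum_sub_mul (fun k => hα.nonneg (hd k)) (hα.pos hε).le
      fun k hk => hα.2.1.monotoneOn hε.le (hd k) (not_le.mp (mem_filter.mp hk).2).le
  have hsum' : ∑ k, ((N : ℝ) - k) * alphaLow (d k) ≤ N * C := by
    simp only [div_mul_eq_mul_div, ← sum_div, div_le_iff₀ hNpos] at hsum
    linarith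
  rw [hcard, sub_le_sub_iff_left]
  exact le_sqrt_div_sqrt_div_sqrt hNpos.le (hα.pos hε) (by linarith)

theorem bounded_rotated_cost_implies_weak_turnpike
    (alphaLow : ℝ → ℝ) (hα : IsKInfty alphaLow)
    (C : ℝ) (hC : 0 < C) (N : ℕ) (hN : 1 ≤ N)
    (d : Fin N → ℝ) (hd : ∀ k, 0 ≤ d k)
    (hsum : ∑ k : Fin N, (((N : ℝ) - (k : ℕ)) / N) * alphaLow (d k) ≤ C) :
    ∀ ε : ℝ, 0 < ε →
      (N : ℝ) - Real.sqrt N / (Real.sqrt (alphaLow ε) / Real.sqrt (2 * C)) ≤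
        ((Finset.univ.filter (fun k : Fin N => d k ≤ ε)).card : ℝ) :=
  bounded_rotated_cost_implies_weak_turnpike_general alphaLow hα C N hN d hd hsum
end

section
/- Uniform bound from reachability: suppose ℓ is nonnegative and bounded above by ℓ_max on X × U, |λ| ≤ λ̄ on X, and the optimal orbit Π* (of period p* with average cost ℓ* ≥ 0) can be reached from x in M steps by a feasible input, after which one can follow the orbit. Then for all N ≥ 1, V_N^β(x) - ((N+1)/2)·ℓ* + λ(x) + λ̄ ≤ M·(ℓ_max - ℓ*) + 2λ̄ + ℓ*·p*. -/
/-- The trajectory of `x(k+1) = f(x(k), u(k))` starting at `x`. -/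
def traj {E F : Type*} (f : E → F → E) (x : E) (u : ℕ → F) : ℕ → E
  | 0 => x
  | k + 1 => f (traj f x u k) (u k)

/-- Feasible input sequences of horizon `N` starting at `x`. -/
def feas {E F : Type*} (X : Set E) (U : Set F) (f : E → F → E) (N : ℕ) (x : E) :
    Set (ℕ → F) :=
  {u | (∀ k < N, u k ∈ U) ∧ ∀ k ≤ N, traj f x u k ∈ X}

/-- Linearly discounted cost functional `J_N^β`. -/
noncomputable def Jdisc {E F : Type*} (f : E → F → E) (ℓ : E → F → ℝ)
    (N : ℕ) (x : E) (u : ℕ → F) : ℝ :=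
  ∑ k ∈ Finset.range N, (((N : ℝ) - k) / N) * ℓ (traj f x u k) (u k)

/-- Linearly discounted optimal value function `V_N^β`. -/
noncomputable def Vdisc {E F : Type*} (X : Set E) (U : Set F) (f : E → F → E)
    (ℓ : E → F → ℝ) (N : ℕ) (x : E) : ℝ :=
  sInf (Jdisc f ℓ N x '' feas X U f N x)


/-!
Follow `ubar` for `M` steps and then the orbit. Each of the first `M` stages costs at most
`ℓmax`, and its weight is at most `1`, so it exceeds its share `β_N(k) ℓ*` by at most
`ℓmax - ℓ*`. On the orbit the deviations `ℓ - ℓ*` sum to zero over every period while the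
weights `β_N` decrease, so the orbit part exceeds its share by at most one period's cost `p ℓ*`.
With `∑_{k<N} β_N(k) = (N + 1) / 2` and `|λ| ≤ λ̄` this is the bound.
-/

open Finset

theorem traj_congr {E F : Type*} {f : E → F → E} {x : E} {u v : ℕ → F} {k : ℕ}
    (h : ∀ i < k, u i = v i) : traj f x u k = traj f x v k := by
  induction k with
  | zero => rfl
  | succ k ih => simp only [traj, ih fun i hi => h i (by omega), h k (by omega)]

theorem traj_add {E F : Type*} (f : E → F → E) (x : E) (u : ℕ → F) (m n : ℕ) :
    traj f x u (m + n) = traj f (traj f x u m) (fun k => u (m + k)) n := by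
  induction n with
  | zero => rfl
  | succ n ih => rw [← Nat.add_assoc, traj, ih]; rfl

theorem traj_eq_of_forall_succ {E F : Type*} {f : E → F → E} {xs : ℕ → E} {us : ℕ → F}
    (h : ∀ k, xs (k + 1) = f (xs k) (us k)) : traj f (xs 0) us = xs := by
  funext k
  induction k with
  | zero => rfl
  | succ k ih => rw [traj, ih, h]

theorem exists_input_following_orbit {E F : Type*} {X : Set E} {U : Set F} {f : E → F → E}
    {xs : ℕ → E} {us : ℕ → F} (hfeas : ∀ k, xs k ∈ X ∧ us k ∈ U)
    (hdyn : ∀ k, xs (k + 1) = f (xs k) (us k)) {x : E} {M l : ℕ} {ubar : ℕ → F}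
    (hubar : ubar ∈ feas X U f M x) (hreach : traj f x ubar M = xs l) :
    ∃ u : ℕ → F, (∀ k, u k ∈ U ∧ traj f x u k ∈ X) ∧
      ∀ j, u (M + j) = us (l + j) ∧ traj f x u (M + j) = xs (l + j) := by
  set u : ℕ → F := fun k => if k < M then ubar k else us (l + (k - M))
  have hhead : ∀ k ≤ M, traj f x u k = traj f x ubar k := fun k hk =>
    traj_congr fun i hi => if_pos (by omega)
  have hu : ∀ j, u (M + j) = us (l + j) := fun j => by simp [u]
  have htail : ∀ j, u (M + j) = us (l + j) ∧ traj f x u (M + j) = xs (l + j) := by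
    refine fun j => ⟨hu j, ?_⟩
    rw [traj_add, hhead M le_rfl, hreach, funext hu]
    exact congrFun (traj_eq_of_forall_succ (xs := fun j => xs (l + j)) fun k => hdyn (l + k)) j
  refine ⟨u, fun k => ?_, htail⟩
  rcases lt_or_ge k M with hk | hk
  · rw [hhead k hk.le]
    exact ⟨by simpa [u, hk] using hubar.1 k hk, hubar.2 k hk.le⟩
  · obtain ⟨j, rfl⟩ := Nat.exists_eq_add_of_le hk
    rw [(htail j).1, (htail j).2]
    exact ⟨(hfeas _).2, (hfeas _).1⟩

theorem Function.Periodic.sum_range_comp_add {α : Type*} [AddCancelCommMonoid α] {c : ℕ → α}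
    {p : ℕ} (hc : Function.Periodic c p) (a : ℕ) :
    ∑ i ∈ range p, c (a + i) = ∑ i ∈ range p, c i := by
  induction a with
  | zero => simp
  | succ a ih =>
    rw [← ih, ← add_left_inj (c a)]
    calc ∑ i ∈ range p, c (a + 1 + i) + c a = ∑ i ∈ range (p + 1), c (a + i) := by
          rw [sum_range_succ']; simp only [Nat.add_assoc, Nat.add_comm 1, Nat.add_zero]
      _ = ∑ i ∈ range p, c (a + i) + c a := by rw [sum_range_succ, hc]

section DiscountedSums

variable {β g c : ℕ → ℝ} {p n : ℕ} {L : ℝ}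

theorem sum_mul_le_mul_sum_of_antitone (hβ : Antitone β) (hβ0 : 0 ≤ β 0) (hg : ∀ k, 0 ≤ g k)
    (hnp : n ≤ p) : ∑ k ∈ range n, β k * g k ≤ β 0 * ∑ k ∈ range p, g k :=
  calc ∑ k ∈ range n, β k * g k ≤ ∑ k ∈ range n, β 0 * g k :=
        sum_le_sum fun k _ => mul_le_mul_of_nonneg_right (hβ k.zero_le) (hg k)
    _ ≤ β 0 * ∑ k ∈ range p, g k := by
        rw [← mul_sum]
        exact mul_le_mul_of_nonneg_left
          (sum_le_sum_of_subset_of_nonneg (range_subset_range.2 hnp) fun k _ _ => hg k) hβ0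

theorem nonneg_of_sum_range_eq_mul (hp : 0 < p) (hg : ∀ k, 0 ≤ g k)
    (hsum : ∑ k ∈ range p, g k = p * L) : 0 ≤ L := by
  have : 0 ≤ (p : ℝ) * L := hsum ▸ sum_nonneg fun k _ => hg k
  exact nonneg_of_mul_nonneg_right this (by exact_mod_cast hp)

theorem sum_range_mul_sub_le_of_antitone (hp : 0 < p) (hβ : Antitone β) (hβp : 0 ≤ β p)
    (hg : ∀ k, 0 ≤ g k) (hsum : ∑ k ∈ range p, g k = p * L) :
    ∑ k ∈ range p, β k * (g k - L) ≤ p * L * (β 0 - β p) := by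
  have hL := nonneg_of_sum_range_eq_mul hp hg hsum
  have hhead := sum_mul_le_mul_sum_of_antitone hβ (hβp.trans (hβ p.zero_le)) hg (le_refl p)
  have hβsum : (p : ℝ) * β p ≤ ∑ k ∈ range p, β k := by
    simpa using card_nsmul_le_sum (range p) β (β p) fun k hk => hβ (mem_range.1 hk).le
  rw [hsum] at hhead
  simp only [mul_sub, sum_sub_distrib, ← sum_mul]
  nlinarith

theorem sum_antitone_mul_sub_le_of_periodic (hp : 0 < p) (hg0 : ∀ k, 0 ≤ g k)
    (hg : Function.Periodic g p) (hsum : ∑ k ∈ range p, g k = p * L) (hβ : Antitone β)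
    (hβn : 0 ≤ β n) : ∑ k ∈ range n, β k * (g k - L) ≤ p * L * β 0 := by
  have hL := nonneg_of_sum_range_eq_mul hp hg0 hsum
  induction n using Nat.strong_induction_on generalizing β with
  | _ n ih =>
  rcases le_or_gt n p with hnp | hpn
  · have hhead := sum_mul_le_mul_sum_of_antitone hβ (hβn.trans (hβ n.zero_le)) hg0 hnp
    have hβsum : 0 ≤ ∑ k ∈ range n, β k := sum_nonneg fun k hk =>
      hβn.trans (hβ (mem_range.1 hk).le)
    rw [hsum] at hhead
    simp only [mul_sub, sum_sub_distrib, ← sum_mul]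
    nlinarith
  · obtain ⟨m, rfl⟩ := Nat.exists_eq_add_of_le hpn.le
    have hβp : 0 ≤ β p := hβn.trans (hβ (p.le_add_right m))
    have htail : ∑ k ∈ range m, β (p + k) * (g (p + k) - L) ≤ p * L * β p := by
      simpa [Nat.add_comm p, hg _] using
        ih m (by omega) (β := fun k => β (p + k)) (fun _ _ h => hβ (Nat.add_le_add_left h p)) hβn
    have hhead := sum_range_mul_sub_le_of_antitone hp hβ hβp hg0 hsum
    rw [sum_range_add]
    linarith

theorem sum_mul_le_of_eventually_periodic {M : ℕ} {Lmax : ℝ} (hp : 0 < p) (hc0 : ∀ k, 0 ≤ c k)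
    (hc : ∀ k, c k ≤ Lmax) (hper : Function.Periodic (fun j => c (M + j)) p)
    (hsum : ∑ j ∈ range p, c (M + j) = p * L) (hβ : Antitone β) (hβ1 : β 0 ≤ 1)
    (hβn : 0 ≤ β n) :
    ∑ k ∈ range n, β k * c k ≤ L * ∑ k ∈ range n, β k + M * (Lmax - L) + p * L := by
  have hL := nonneg_of_sum_range_eq_mul hp (fun j => hc0 (M + j)) hsum
  have hLmax : L ≤ Lmax := by
    have : (p : ℝ) * L ≤ p * Lmax := by
      simpa [hsum] using sum_le_card_nsmul (range p) _ Lmax fun j _ => hc (M + j)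
    exact le_of_mul_le_mul_left this (by exact_mod_cast hp)
  have hstage : ∀ k ≤ n, β k * (c k - L) ≤ Lmax - L := fun k hk => by
    have h0 : 0 ≤ β k := hβn.trans (hβ hk)
    have h1 : β k ≤ 1 := (hβ k.zero_le).trans hβ1
    nlinarith [hc k]
  have hhead : ∀ m ≤ n, ∑ k ∈ range m, β k * (c k - L) ≤ m * (Lmax - L) := fun m hm => by
    simpa using sum_le_card_nsmul (range m) _ _ fun k hk => hstage k ((mem_range.1 hk).le.trans hm)
  suffices ∑ k ∈ range n, β k * (c k - L) ≤ M * (Lmax - L) + p * L by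
    simp only [mul_sub, sum_sub_distrib, ← sum_mul] at this
    linarith
  rcases le_or_gt n M with hnM | hMn
  · have : (n : ℝ) * (Lmax - L) ≤ M * (Lmax - L) :=
      mul_le_mul_of_nonneg_right (by exact_mod_cast hnM) (by linarith)
    nlinarith [hhead n le_rfl]
  · obtain ⟨m, rfl⟩ := Nat.exists_eq_add_of_le hMn.le
    have htail := sum_antitone_mul_sub_le_of_periodic hp (fun j => hc0 (M + j)) hper hsum
      (β := fun k => β (M + k)) (fun _ _ h => hβ (Nat.add_le_add_left h M)) hβn
    have hβM : p * L * β M ≤ p * L :=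
      mul_le_of_le_one_right (by positivity) ((hβ M.zero_le).trans hβ1)
    rw [Nat.add_zero] at htail
    rw [sum_range_add]
    linarith [hhead M (M.le_add_right m)]

end DiscountedSums

noncomputable def linDiscount (N k : ℕ) : ℝ := ((N : ℝ) - k) / N

theorem linDiscount_antitone (N : ℕ) : Antitone (linDiscount N) := fun i j h => by
  unfold linDiscount
  gcongr

theorem linDiscount_le_one (N k : ℕ) : linDiscount N k ≤ 1 :=
  div_le_one_of_le₀ (by linarith [(k.cast_nonneg : (0 : ℝ) ≤ k)]) N.cast_nonneg

theorem linDiscount_self (N : ℕ) : linDiscount N N = 0 := by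
  simp [linDiscount]

theorem linDiscount_nonneg {N k : ℕ} (hk : k ≤ N) : 0 ≤ linDiscount N k :=
  linDiscount_self N ▸ linDiscount_antitone N hk

theorem sum_range_linDiscount {N : ℕ} (hN : N ≠ 0) :
    ∑ k ∈ range N, linDiscount N k = ((N : ℝ) + 1) / 2 := by
  have hid : ∀ n : ℕ, ∑ k ∈ range n, (k : ℝ) = n * (n - 1) / 2 := fun n => by
    induction n with
    | zero => simp
    | succ n ih => rw [sum_range_succ, ih]; push_cast; ring
  simp only [linDiscount, ← sum_div, sum_sub_distrib, sum_const, card_range, nsmul_eq_mul, hid]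
  field_simp
  ring

theorem Jdisc_eq_sum_linDiscount {E F : Type*} (f : E → F → E) (ℓ : E → F → ℝ) (N : ℕ) (x : E)
    (u : ℕ → F) :
    Jdisc f ℓ N x u = ∑ k ∈ range N, linDiscount N k * ℓ (traj f x u k) (u k) := rfl

theorem Vdisc_le_Jdisc {E F : Type*} {X : Set E} {U : Set F} {f : E → F → E} {ℓ : E → F → ℝ}
    (hℓ : ∀ x ∈ X, ∀ u ∈ U, 0 ≤ ℓ x u) {N : ℕ} {x : E} {u : ℕ → F}
    (hu : u ∈ feas X U f N x) : Vdisc X U f ℓ N x ≤ Jdisc f ℓ N x u := by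
  refine csInf_le ⟨0, ?_⟩ (Set.mem_image_of_mem _ hu)
  rintro _ ⟨v, hv, rfl⟩
  rw [Jdisc_eq_sum_linDiscount]
  refine sum_nonneg fun k hk => mul_nonneg (linDiscount_nonneg (mem_range.1 hk).le) ?_
  exact hℓ _ (hv.2 k (mem_range.1 hk).le) _ (hv.1 k (mem_range.1 hk))

theorem uniform_bound_from_reachability_general {E F : Type*}
    (X : Set E) (U : Set F) (f : E → F → E) (ℓ : E → F → ℝ)
    (lam : E → ℝ) (ℓmax lamBar ℓstar : ℝ)
    (hℓ : ∀ x ∈ X, ∀ u ∈ U, 0 ≤ ℓ x u ∧ ℓ x u ≤ ℓmax)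
    (hlam : ∀ x ∈ X, |lam x| ≤ lamBar)
    -- the optimal periodic orbit of period `p`
    (p : ℕ) (hp : 1 ≤ p) (PiX : ℕ → E) (PiU : ℕ → F)
    (hPiper : ∀ k, PiX (k + p) = PiX k ∧ PiU (k + p) = PiU k)
    (hPifeas : ∀ k, PiX k ∈ X ∧ PiU k ∈ U)
    (hPidyn : ∀ k, PiX (k + 1) = f (PiX k) (PiU k))
    (hstar : ℓstar = (1 / (p : ℝ)) * ∑ k ∈ Finset.range p, ℓ (PiX k) (PiU k))
    -- the orbit is reachable from `x` in `M` steps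
    (x : E) (hx : x ∈ X) (M : ℕ) (ubar : ℕ → F) (hubar : ubar ∈ feas X U f M x)
    (l : ℕ) (hreach : traj f x ubar M = PiX l) :
    ∀ N : ℕ, 1 ≤ N →
      Vdisc X U f ℓ N x - (((N : ℝ) + 1) / 2) * ℓstar + lam x + lamBar ≤
        (M : ℝ) * (ℓmax - ℓstar) + 2 * lamBar + ℓstar * p := by
  intro N hN
  obtain ⟨u, hfeas, horbit⟩ := exists_input_following_orbit hPifeas hPidyn hubar hreach
  have hcost : ∀ k, 0 ≤ ℓ (traj f x u k) (u k) ∧ ℓ (traj f x u k) (u k) ≤ ℓmax := fun k =>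
    hℓ _ (hfeas k).2 _ (hfeas k).1
  have hperiodic : Function.Periodic (fun j => ℓ (PiX j) (PiU j)) p := fun j => by
    simp only [(hPiper j).1, (hPiper j).2]
  have hsum : ∑ j ∈ range p, ℓ (PiX (l + j)) (PiU (l + j)) = p * ℓstar := by
    rw [hperiodic.sum_range_comp_add l, hstar]
    field_simp
  have htail_periodic := hperiodic.const_add l
  simp only [← (horbit _).1, ← (horbit _).2] at htail_periodic hsum
  have hJ := sum_mul_le_of_eventually_periodic hp (fun k => (hcost k).1) (fun k => (hcost k).2)
    htail_periodic hsum (linDiscount_antitone N) (linDiscount_le_one N 0) (linDiscount_self N).ge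
  rw [← Jdisc_eq_sum_linDiscount, sum_range_linDiscount (by omega)] at hJ
  have hV := Vdisc_le_Jdisc (fun y hy v hv => (hℓ y hy v hv).1)
    (show u ∈ feas X U f N x from ⟨fun k _ => (hfeas k).1, fun k _ => (hfeas k).2⟩)
  linarith [le_of_abs_le (hlam x hx)]

theorem uniform_bound_from_reachability {E F : Type*}
    (X : Set E) (U : Set F) (f : E → F → E) (ℓ : E → F → ℝ)
    (lam : E → ℝ) (ℓmax lamBar ℓstar : ℝ)
    (hℓ : ∀ x ∈ X, ∀ u ∈ U, 0 ≤ ℓ x u ∧ ℓ x u ≤ ℓmax)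
    (hlam : ∀ x ∈ X, |lam x| ≤ lamBar)
    -- the optimal periodic orbit of period `p`
    (p : ℕ) (hp : 1 ≤ p) (PiX : ℕ → E) (PiU : ℕ → F)
    (hPiper : ∀ k, PiX (k + p) = PiX k ∧ PiU (k + p) = PiU k)
    (hPifeas : ∀ k, PiX k ∈ X ∧ PiU k ∈ U)
    (hPidyn : ∀ k, PiX (k + 1) = f (PiX k) (PiU k))
    (hstar : ℓstar = (1 / (p : ℝ)) * ∑ k ∈ Finset.range p, ℓ (PiX k) (PiU k))
    (hstar0 : 0 ≤ ℓstar)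
    -- the orbit is reachable from `x` in `M` steps
    (x : E) (hx : x ∈ X) (M : ℕ) (ubar : ℕ → F) (hubar : ubar ∈ feas X U f M x)
    (l : ℕ) (hreach : traj f x ubar M = PiX l) :
    ∀ N : ℕ, 1 ≤ N →
      Vdisc X U f ℓ N x - (((N : ℝ) + 1) / 2) * ℓstar + lam x + lamBar ≤
        (M : ℝ) * (ℓmax - ℓstar) + 2 * lamBar + ℓstar * p :=
  uniform_bound_from_reachability_general X U f ℓ lam ℓmax lamBar ℓstar hℓ hlam p hp PiX PiU hPiper
    hPifeas hPidyn hstar x hx M ubar hubar l hreach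
end
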